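/- Let W be a second-order working set selection, let (α^(t))_{t ∈ ℕ} be a sequence in R such that (f(α^(t)))_{t ∈ ℕ} is monotonically increasing, let c > 0, and suppose there is an infinite set T ⊆ ℕ such that for every t ∈ T with α^(t−1) ∉ R* one has f(α^(t)) − f(α^(t−1)) ≥ c · g̃_W(α^(t−1)) (inequality in [0, ∞]; in particular g̃_W(α^(t−1)) is then finite). Then lim_{t→∞} f(α^(t)) = f*. -/

import Mathlib

open Matrix Filter Topology ENNReal

namespace SMO

noncomputable section

variable {l : ℕ}

/-- The dual SVM objective `f(α) = yᵀα − (1/2) αᵀKα`. -/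
def obj (y : Fin l → ℝ) (K : Matrix (Fin l) (Fin l) ℝ) (α : Fin l → ℝ) : ℝ :=
  y ⬝ᵥ α - (1 / 2) * (α ⬝ᵥ (K *ᵥ α))

/-- The gradient `∇f(α) = y − Kα`. -/
def grad (y : Fin l → ℝ) (K : Matrix (Fin l) (Fin l) ℝ) (α : Fin l → ℝ) : Fin l → ℝ :=
  y - K *ᵥ α

/-- The direction `v_B = e_i − e_j` of a working set `B = (i, j)`. -/
def dir (B : Fin l × Fin l) : Fin l → ℝ :=
  Pi.single B.1 1 - Pi.single B.2 1

/-- Lower bound `L_i = min {0, y_i C}`. -/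
def lb (y : Fin l → ℝ) (C : ℝ) (i : Fin l) : ℝ := min 0 (y i * C)

/-- Upper bound `U_i = max {0, y_i C}`. -/
def ub (y : Fin l → ℝ) (C : ℝ) (i : Fin l) : ℝ := max 0 (y i * C)

/-- The feasible region `R`. -/
def feas (y : Fin l → ℝ) (C : ℝ) : Set (Fin l → ℝ) :=
  {α | (∑ i, α i) = 0 ∧ ∀ i, lb y C i ≤ α i ∧ α i ≤ ub y C i}

/-- `I_up(α) = {i : α_i < U_i}`. -/
def Iup (y : Fin l → ℝ) (C : ℝ) (α : Fin l → ℝ) : Set (Fin l) := {i | α i < ub y C i}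

/-- `I_down(α) = {i : α_i > L_i}`. -/
def Idown (y : Fin l → ℝ) (C : ℝ) (α : Fin l → ℝ) : Set (Fin l) := {i | lb y C i < α i}

/-- The set `B(α)` of working sets feasible at `α`. -/
def wsets (y : Fin l → ℝ) (C : ℝ) (α : Fin l → ℝ) : Set (Fin l × Fin l) :=
  {B | B.1 ∈ Iup y C α ∧ B.2 ∈ Idown y C α ∧ B.1 ≠ B.2}

/-- The optimal value `f* = max {f(α) : α ∈ R}`. -/
def fstar (y : Fin l → ℝ) (K : Matrix (Fin l) (Fin l) ℝ) (C : ℝ) : ℝ :=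
  sSup (obj y K '' feas y C)

/-- The optimal set `R* = {α ∈ R : f(α) = f*}`. -/
def opt (y : Fin l → ℝ) (K : Matrix (Fin l) (Fin l) ℝ) (C : ℝ) : Set (Fin l → ℝ) :=
  {α ∈ feas y C | obj y K α = fstar y K C}

/-- The gap function `ψ(α) = max {v_Bᵀ ∇f(α) : B ∈ B(α)}`. -/
def psi (y : Fin l → ℝ) (K : Matrix (Fin l) (Fin l) ℝ) (C : ℝ) (α : Fin l → ℝ) : ℝ :=
  sSup ((fun B => dir B ⬝ᵥ grad y K α) '' wsets y C α)

/-- The Newton-step gain `g̃_B(α) = (v_Bᵀ∇f(α))² / (2 v_BᵀKv_B) ∈ [0, ∞]`, with the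
conventions `g̃_B(α) = 0` if `v_BᵀKv_B = 0` and `v_Bᵀ∇f(α) = 0`, and `g̃_B(α) = ∞` if
`v_BᵀKv_B = 0` and `v_Bᵀ∇f(α) ≠ 0`. -/
def ngain (y : Fin l → ℝ) (K : Matrix (Fin l) (Fin l) ℝ) (B : Fin l × Fin l)
    (α : Fin l → ℝ) : ℝ≥0∞ :=
  if dir B ⬝ᵥ (K *ᵥ dir B) = 0 then
    (if dir B ⬝ᵥ grad y K α = 0 then 0 else ⊤)
  else ENNReal.ofReal ((dir B ⬝ᵥ grad y K α) ^ 2 / (2 * (dir B ⬝ᵥ (K *ᵥ dir B))))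

/-- A second-order working set selection: on every non-optimal feasible `α` it returns a
working set `W(α) = (i, j) ∈ B(α)` such that `i` maximizes `(∇f(α))_n` over `n ∈ I_up(α)`
and `j` maximizes `g̃_{(i,n)}(α)` over `n ∈ I_down(α) \ {i}`. -/
def IsSecondOrderWSS (y : Fin l → ℝ) (K : Matrix (Fin l) (Fin l) ℝ) (C : ℝ)
    (W : (Fin l → ℝ) → Fin l × Fin l) : Prop :=
  ∀ α ∈ feas y C \ opt y K C,
    W α ∈ wsets y C α ∧
    (∀ n ∈ Iup y C α, grad y K α n ≤ grad y K α (W α).1) ∧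
    (∀ n ∈ Idown y C α, n ≠ (W α).1 → ngain y K ((W α).1, n) α ≤ ngain y K (W α) α)

/-! If `f(α^(t))` converged to some `L < f*`, a cluster point `β` of `(α^(t))_{t ∈ T}` would be
feasible with `f(β) ≤ L < f*`, so some pair `i ∈ I_up(β)`, `j ∈ I_down(β)` would violate the
optimality condition by `∇f(β)_i - ∇f(β)_j = δ > 0`. For `t ∈ T` with `α^(t)` near `β` the same
pair violates it by `δ / 2`. Since `W(α)₁` maximizes `∇f(α)` over `I_up(α)`, the pair `(W(α)₁, j)`
violates it by at least as much, so `g̃_W(α^(t)) ≥ g̃_{(W(α)₁, j)}(α^(t)) ≥ (δ/2)² / (2M)` with `M`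
bounding all `v_BᵀKv_B`. Infinitely many steps thus gain a fixed amount, contradicting
convergence. -/

lemma dir_dotProduct (B : Fin l × Fin l) (g : Fin l → ℝ) : dir B ⬝ᵥ g = g B.1 - g B.2 := by
  simp [dir, sub_dotProduct, single_dotProduct]

lemma obj_add (y : Fin l → ℝ) {K : Matrix (Fin l) (Fin l) ℝ} (hK : K.IsSymm)
    (α d : Fin l → ℝ) :
    obj y K (α + d) = obj y K α + d ⬝ᵥ grad y K α - 1 / 2 * (d ⬝ᵥ (K *ᵥ d)) := by
  have hcross : α ⬝ᵥ (K *ᵥ d) = d ⬝ᵥ (K *ᵥ α) := by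
    rw [dotProduct_mulVec, ← vecMul_transpose, hK.eq, dotProduct_comm]
  have hy := dotProduct_comm d y
  simp only [obj, grad, mulVec_add, dotProduct_add, add_dotProduct, dotProduct_sub] at *
  linarith

lemma obj_le_add_dotProduct_grad (y : Fin l → ℝ) {K : Matrix (Fin l) (Fin l) ℝ}
    (hK : K.PosSemidef) (α β : Fin l → ℝ) :
    obj y K β ≤ obj y K α + (β - α) ⬝ᵥ grad y K α := by
  have hquad : 0 ≤ (β - α) ⬝ᵥ (K *ᵥ (β - α)) := by
    simpa using hK.dotProduct_mulVec_nonneg (β - α)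
  have := obj_add y (isHermitian_iff_isSymm.1 hK.isHermitian) α (β - α)
  rw [add_sub_cancel] at this
  linarith

lemma continuous_obj (y : Fin l → ℝ) (K : Matrix (Fin l) (Fin l) ℝ) : Continuous (obj y K) := by
  unfold obj
  fun_prop

lemma continuous_grad (y : Fin l → ℝ) (K : Matrix (Fin l) (Fin l) ℝ) : Continuous (grad y K) := by
  unfold grad
  fun_prop

lemma isCompact_feas (y : Fin l → ℝ) (C : ℝ) : IsCompact (feas y C) := by
  have hbox : IsCompact (Set.univ.pi fun i => Set.Icc (lb y C i) (ub y C i)) :=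
    isCompact_univ_pi fun _ => isCompact_Icc
  refine hbox.of_isClosed_subset ?_ fun α hα => Set.mem_univ_pi.2 fun i => hα.2 i
  have : feas y C =
      {α : Fin l → ℝ | ∑ i, α i = 0} ∩ ⋂ i, {α | α i ∈ Set.Icc (lb y C i) (ub y C i)} := by
    ext α
    simp [feas]
  rw [this]
  exact (isClosed_eq (by fun_prop) continuous_const).inter
    (isClosed_iInter fun i => isClosed_Icc.preimage (continuous_apply i))

lemma zero_mem_feas (y : Fin l → ℝ) (C : ℝ) : (0 : Fin l → ℝ) ∈ feas y C :=
  ⟨by simp, fun _ => ⟨min_le_left _ _, le_max_left _ _⟩⟩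

lemma isGreatest_fstar (y : Fin l → ℝ) (K : Matrix (Fin l) (Fin l) ℝ) (C : ℝ) :
    IsGreatest (obj y K '' feas y C) (fstar y K C) := by
  obtain ⟨m, hm⟩ := ((isCompact_feas y C).image (continuous_obj y K)).exists_isGreatest
    ((Set.nonempty_of_mem (zero_mem_feas y C)).image _)
  rwa [fstar, hm.csSup_eq]

lemma exists_lt_of_sum_eq_zero_of_dotProduct_pos {ι : Type*} [Fintype ι] {d g : ι → ℝ}
    (hd : ∑ i, d i = 0) (hdg : 0 < d ⬝ᵥ g) :
    ∃ i j, 0 < d i ∧ d j < 0 ∧ g j < g i := by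
  classical
  by_contra! hsep
  have hpos : ∃ i, 0 < d i := by
    by_contra! hle
    have hzero := (Finset.sum_eq_zero_iff_of_nonpos fun i _ => hle i).1 hd
    simp [dotProduct, hzero] at hdg
  obtain ⟨i₁, hi₁⟩ := hpos
  obtain ⟨i₀, hi₀, hmax⟩ :=
    (Finset.univ.filter fun i => 0 < d i).exists_max_image g ⟨i₁, by simpa using hi₁⟩
  -- `g i₀` separates the values of `g` on `{d > 0}` from those on `{d < 0}`.
  have hle : ∀ i, d i * g i ≤ d i * g i₀ := by
    intro i
    rcases lt_trichotomy (d i) 0 with hneg | hzero | hpos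
    · exact mul_le_mul_of_nonpos_left (hsep i₀ i (by simpa using hi₀) hneg) hneg.le
    · simp [hzero]
    · exact mul_le_mul_of_nonneg_left (hmax i (by simpa using hpos)) hpos.le
  have : d ⬝ᵥ g ≤ 0 := by
    calc d ⬝ᵥ g ≤ ∑ i, d i * g i₀ := Finset.sum_le_sum fun i _ => hle i
      _ = 0 := by rw [← Finset.sum_mul, hd, zero_mul]
  linarith

lemma exists_violating_pair {y : Fin l → ℝ} {K : Matrix (Fin l) (Fin l) ℝ} {C : ℝ}
    (hK : K.PosSemidef) {α : Fin l → ℝ} (hα : α ∈ feas y C) (hlt : obj y K α < fstar y K C) :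
    ∃ i ∈ Iup y C α, ∃ j ∈ Idown y C α, grad y K α j < grad y K α i := by
  obtain ⟨αs, hαs, hαs_eq⟩ := (isGreatest_fstar y K C).1
  have hsum : ∑ i, (αs - α) i = 0 := by
    simp [Finset.sum_sub_distrib, hαs.1, hα.1]
  have hcorr : 0 < (αs - α) ⬝ᵥ grad y K α := by
    linarith [obj_le_add_dotProduct_grad y hK α αs]
  obtain ⟨i, j, hi, hj, hij⟩ := exists_lt_of_sum_eq_zero_of_dotProduct_pos hsum hcorr
  refine ⟨i, ?_, j, ?_, hij⟩
  · exact (sub_pos.1 hi).trans_le (hαs.2 i).2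
  · exact (hαs.2 j).1.trans_lt (sub_neg.1 hj)

lemma ofReal_sq_div_le_ngain (y : Fin l → ℝ) {K : Matrix (Fin l) (Fin l) ℝ}
    (hK : K.PosSemidef) {B : Fin l × Fin l} {α : Fin l → ℝ} {s M : ℝ}
    (hM : dir B ⬝ᵥ (K *ᵥ dir B) ≤ M) (hs : 0 < s) (hsB : s ≤ dir B ⬝ᵥ grad y K α) :
    ENNReal.ofReal (s ^ 2 / (2 * M)) ≤ ngain y K B α := by
  have hquad : 0 ≤ dir B ⬝ᵥ (K *ᵥ dir B) := by
    simpa using hK.dotProduct_mulVec_nonneg (dir B)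
  unfold ngain
  split_ifs with hq hg
  · linarith
  · exact le_top
  · gcongr

lemma IsSecondOrderWSS.exists_ofReal_le_ngain {y : Fin l → ℝ} {K : Matrix (Fin l) (Fin l) ℝ}
    {C : ℝ} {W : (Fin l → ℝ) → Fin l × Fin l} (hW : IsSecondOrderWSS y K C W)
    (hK : K.PosSemidef) {s : ℝ} (hs : 0 < s) :
    ∃ ε > 0, ∀ α ∈ feas y C \ opt y K C, ∀ i ∈ Iup y C α, ∀ j ∈ Idown y C α,
      s ≤ grad y K α i - grad y K α j → ENNReal.ofReal ε ≤ ngain y K (W α) α := by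
  obtain ⟨M, hM⟩ := Finite.exists_le fun B : Fin l × Fin l => dir B ⬝ᵥ (K *ᵥ dir B)
  refine ⟨s ^ 2 / (2 * max M 1), by positivity, fun α hα i hi j hj hsij => ?_⟩
  obtain ⟨-, hup, hdown⟩ := hW α hα
  have hsW : s ≤ dir ((W α).1, j) ⬝ᵥ grad y K α := by
    rw [dir_dotProduct]
    linarith [hup i hi]
  have hjW : j ≠ (W α).1 := by
    rintro rfl
    simp [dir_dotProduct] at hsW
    linarith
  exact (ofReal_sq_div_le_ngain y hK ((hM _).trans (le_max_left M 1)) hs hsW).trans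
    (hdown j hj hjW)

lemma exists_mapClusterPt_of_obj_le {y : Fin l → ℝ} {K : Matrix (Fin l) (Fin l) ℝ} {C L : ℝ}
    {a : ℕ → Fin l → ℝ} (ha : ∀ t, a t ∈ feas y C) (haL : ∀ t, obj y K (a t) ≤ L)
    {T : Set ℕ} (hT : T.Infinite) :
    ∃ β ∈ feas y C, obj y K β ≤ L ∧ MapClusterPt β (atTop ⊓ 𝓟 T) a := by
  obtain ⟨β, ⟨hβ, hβL⟩, hcl⟩ := ((isCompact_feas y C).inter_right
      (isClosed_le (continuous_obj y K) continuous_const)).exists_mapClusterPt_of_frequently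
    (frequently_inf_principal.2 (Nat.frequently_atTop_iff_infinite.2
      (hT.mono fun t ht => ⟨ht, ha t, haL t⟩)))
  exact ⟨β, hβ, hβL, hcl⟩

lemma eventually_violating_nhds {y : Fin l → ℝ} {K : Matrix (Fin l) (Fin l) ℝ} {C s : ℝ}
    {β : Fin l → ℝ} {i j : Fin l} (hi : i ∈ Iup y C β) (hj : j ∈ Idown y C β)
    (hs : s < grad y K β i - grad y K β j) :
    ∀ᶠ α in 𝓝 β, i ∈ Iup y C α ∧ j ∈ Idown y C α ∧ s < grad y K α i - grad y K α j := by
  have hgap := ((continuous_apply i).comp (continuous_grad y K)).sub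
    ((continuous_apply j).comp (continuous_grad y K))
  exact ((continuous_apply i).continuousAt.eventually_lt continuousAt_const hi).and <|
    (continuousAt_const.eventually_lt (continuous_apply j).continuousAt hj).and <|
    continuousAt_const.eventually_lt hgap.continuousAt hs

theorem convergence_theorem_general
    (y : Fin l → ℝ)
    (K : Matrix (Fin l) (Fin l) ℝ) (hK : K.PosSemidef) (C : ℝ)
    (W : (Fin l → ℝ) → Fin l × Fin l) (hW : IsSecondOrderWSS y K C W)
    (a : ℕ → Fin l → ℝ) (ha : ∀ t, a t ∈ feas y C)
    (hmono : Monotone fun t => obj y K (a t))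
    (c : ℝ) (hc : 0 < c) (T : Set ℕ) (hT : T.Infinite)
    (hstep : ∀ t ∈ T, a t ∉ opt y K C →
      ENNReal.ofReal c * ngain y K (W (a t)) (a t) ≤
        ENNReal.ofReal (obj y K (a (t + 1)) - obj y K (a t))) :
    Tendsto (fun t => obj y K (a t)) atTop (𝓝 (fstar y K C)) := by
  have hfstar : ∀ t, obj y K (a t) ≤ fstar y K C :=
    fun t => (isGreatest_fstar y K C).2 ⟨a t, ha t, rfl⟩
  obtain ⟨L, hL⟩ : ∃ L, Tendsto (fun t => obj y K (a t)) atTop (𝓝 L) :=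
    ⟨_, tendsto_atTop_ciSup hmono ⟨_, Set.forall_mem_range.2 hfstar⟩⟩
  have haL : ∀ t, obj y K (a t) ≤ L := hmono.ge_of_tendsto hL
  obtain hLeq | hLlt := (le_of_tendsto' hL hfstar).eq_or_lt
  · rwa [← hLeq]
  exfalso
  obtain ⟨β, hβ, hβL, hcl⟩ := exists_mapClusterPt_of_obj_le ha haL hT
  obtain ⟨i, hi, j, hj, hij⟩ := exists_violating_pair hK hβ (hβL.trans_lt hLlt)
  have hδ : 0 < grad y K β i - grad y K β j := sub_pos.2 hij
  obtain ⟨ε, hε, hngain⟩ := hW.exists_ofReal_le_ngain hK (half_pos hδ)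
  have hsmall : ∀ᶠ t in atTop, obj y K (a (t + 1)) - obj y K (a t) < c * ε := by
    have := (hL.comp (tendsto_add_atTop_nat 1)).sub hL
    rw [sub_self] at this
    exact this.eventually_lt_const (mul_pos hc hε)
  obtain ⟨t, ⟨htT, hit, hjt, hgap⟩, hgain⟩ := ((frequently_inf_principal.1
    (hcl.frequently (eventually_violating_nhds hi hj (half_lt_self hδ)))).and_eventually
      hsmall).exists
  have hnopt : a t ∉ opt y K C := fun h => (haL t).not_gt (h.2 ▸ hLlt)
  have hgain_ge := (mul_le_mul' le_rfl (hngain _ ⟨ha t, hnopt⟩ i hit j hjt hgap.le)).trans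
    (hstep t htT hnopt)
  rw [← ENNReal.ofReal_mul hc.le] at hgain_ge
  exact hgain_ge.not_gt ((ENNReal.ofReal_lt_ofReal_iff (mul_pos hc hε)).2 hgain)

/-- If `(f(α^(t)))` is monotonically increasing, `c > 0`, and there is an
infinite set `T ⊆ ℕ` such that for every `t ∈ T` with `α^(t) ∉ R*` the step to `α^(t+1)`
gains at least `c · g̃_W(α^(t))` (inequality in `[0, ∞]`), then `f(α^(t)) → f*`. -/
theorem convergence_theorem
    (hl : 2 ≤ l) (y : Fin l → ℝ) (hy : ∀ i, y i = 1 ∨ y i = -1)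
    (K : Matrix (Fin l) (Fin l) ℝ) (hK : K.PosSemidef) (C : ℝ) (hC : 0 < C)
    (W : (Fin l → ℝ) → Fin l × Fin l) (hW : IsSecondOrderWSS y K C W)
    (a : ℕ → Fin l → ℝ) (ha : ∀ t, a t ∈ feas y C)
    (hmono : Monotone fun t => obj y K (a t))
    (c : ℝ) (hc : 0 < c) (T : Set ℕ) (hT : T.Infinite)
    (hstep : ∀ t ∈ T, a t ∉ opt y K C →
      ENNReal.ofReal c * ngain y K (W (a t)) (a t) ≤
        ENNReal.ofReal (obj y K (a (t + 1)) - obj y K (a t))) :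
    Tendsto (fun t => obj y K (a t)) atTop (𝓝 (fstar y K C)) :=
  convergence_theorem_general y K hK C W hW a ha hmono c hc T hT hstep

end

end SMO
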